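/- Let A be a unital C*-algebra and let α, γ ∈ A satisfy the SU_q(2) relations, and suppose the topological closure of the star-subalgebra generated by {α, γ} is all of A. Let σ be a group homomorphism from the circle group 𝕋 = {z ∈ ℂ : |z| = 1} to the group of *-automorphisms of A such that the map 𝕋 × A → A, (z, a) ↦ σ_z(a), is continuous, and such that σ_z(α) = z·α and σ_z(γ) = z·γ for all z ∈ 𝕋. Then the fixed-point subalgebra {a ∈ A : σ_z(a) = a for all z ∈ 𝕋} equals the topological closure of the star-subalgebra of A generated by {αγ*, γ*γ}. -/

import Mathlib

open scoped ComplexConjugate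

/-- Elements `α`, `γ` of a unital C*-algebra satisfy the SU_q(2) relations. -/
def SUq2Rel {A : Type*} [Ring A] [StarRing A] [Module ℂ A] (q : ℂ) (α γ : A) : Prop :=
  star α * α + star γ * γ = 1 ∧
  α * star α + (((‖q‖ : ℝ) : ℂ) ^ 2) • (star γ * γ) = 1 ∧
  α * γ = conj q • (γ * α) ∧
  γ * star γ = star γ * γ

namespace SUqAux
set_option linter.unusedSectionVars false

variable {A : Type*} [NormedRing A] [StarRing A] [CStarRing A] [NormedAlgebra ℂ A]
    [StarModule ℂ A] [CompleteSpace A]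

section Algebraic

variable (q : ℂ) (α γ : A)

local notation "nn" => star γ * γ

lemma abs_sq_eq (q : ℂ) : (((‖q‖ : ℝ) : ℂ)) ^ 2 = conj q * q := by
  rw [← Complex.normSq_eq_conj_mul_self]
  norm_cast
  exact Complex.sq_norm q

variable {q α γ}

lemma h1' (h : SUq2Rel q α γ) : star α * α = 1 - nn := eq_sub_of_add_eq h.1

lemma h2' (h : SUq2Rel q α γ) : α * star α = 1 - (conj q * q) • nn := by
  rw [← abs_sq_eq]; exact eq_sub_of_add_eq h.2.1

lemma nn_star : star (nn) = nn := by simp [star_mul, star_star, mul_assoc]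

lemma alpha_nn (h : SUq2Rel q α γ) : α * nn = (conj q * q) • (nn * α) := by
  have e : α * (star α * α) = (α * star α) * α := (mul_assoc _ _ _).symm
  rw [h1' h, h2' h, mul_sub, sub_mul, mul_one, one_mul, smul_mul_assoc] at e
  exact sub_right_injective e

lemma gamma_nn (h : SUq2Rel q α γ) : γ * nn = nn * γ := by
  calc γ * (star γ * γ) = (γ * star γ) * γ := (mul_assoc _ _ _).symm
  _ = (star γ * γ) * γ := by rw [h.2.2.2]

lemma stargamma_nn (h : SUq2Rel q α γ) : star γ * (nn) = nn * star γ := by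
  calc star γ * (star γ * γ) = star γ * (γ * star γ) := by rw [h.2.2.2]
  _ = (star γ * γ) * star γ := (mul_assoc _ _ _).symm

lemma h3s (h : SUq2Rel q α γ) : star γ * star α = q • (star α * star γ) := by
  have := congrArg star h.2.2.1
  simpa [star_mul, star_smul, star_star, Complex.conj_conj] using this

lemma hkey (hq : q ≠ 0) (h : SUq2Rel q α γ) : star γ * α = q⁻¹ • (α * star γ) := by
  have h4 := h.2.2.2
  have h3 := h.2.2.1
  set e := q • (star γ * α) - α * star γ with he
  have hse : star e = conj q • (star α * γ) - γ * star α := by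
    simp [he, star_sub, star_smul, star_mul, star_star]
  have c1 : (conj q * q) • ((star α * γ) * (star γ * α)) = nn - nn * nn := by
    have a1 : (star α * γ) * (star γ * α) = star α * ((γ * star γ) * α) := by noncomm_ring
    rw [a1, h4]
    calc (conj q * q) • (star α * ((star γ * γ) * α))
        = star α * ((conj q * q) • ((star γ * γ) * α)) := (mul_smul_comm _ _ _).symm
      _ = star α * (α * (star γ * γ)) := by rw [← alpha_nn h]
      _ = (star α * α) * (star γ * γ) := (mul_assoc _ _ _).symm
      _ = (1 - star γ * γ) * (star γ * γ) := by rw [h1' h]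
      _ = nn - nn * nn := by noncomm_ring
  have c2 : conj q • ((star α * γ) * (α * star γ)) = nn - nn * nn := by
    have a1 : (star α * γ) * (α * star γ) = star α * ((γ * α) * star γ) := by noncomm_ring
    calc conj q • ((star α * γ) * (α * star γ))
        = star α * ((conj q • (γ * α)) * star γ) := by
          rw [a1]; simp only [smul_mul_assoc, mul_smul_comm]
      _ = star α * ((α * γ) * star γ) := by rw [← h3]
      _ = (star α * α) * (γ * star γ) := by noncomm_ring
      _ = (1 - star γ * γ) * (star γ * γ) := by rw [h1' h, h4]
      _ = nn - nn * nn := by noncomm_ring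
  have c3 : q • ((γ * star α) * (star γ * α)) = nn - nn * nn := by
    have a1 : (γ * star α) * (star γ * α) = γ * ((star α * star γ) * α) := by noncomm_ring
    calc q • ((γ * star α) * (star γ * α))
        = γ * ((q • (star α * star γ)) * α) := by
          rw [a1]; simp only [smul_mul_assoc, mul_smul_comm]
      _ = γ * ((star γ * star α) * α) := by rw [← h3s h]
      _ = (γ * star γ) * (star α * α) := by noncomm_ring
      _ = (star γ * γ) * (1 - star γ * γ) := by rw [h1' h, h4]
      _ = nn - nn * nn := by noncomm_ring
  have c4 : (γ * star α) * (α * star γ) = nn - nn * nn := by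
    have a1 : (γ * star α) * (α * star γ) = γ * ((star α * α) * star γ) := by noncomm_ring
    rw [a1, h1' h]
    have a2 : γ * ((1 - star γ * γ) * star γ) = γ * star γ - (γ * (star γ * γ)) * star γ := by
      noncomm_ring
    rw [a2, gamma_nn h]
    calc γ * star γ - ((star γ * γ) * γ) * star γ
        = γ * star γ - (star γ * γ) * (γ * star γ) := by noncomm_ring
      _ = nn - nn * nn := by rw [h4]
  have key : star e * e = 0 := by
    have expand : star e * e
        = (conj q * q) • ((star α * γ) * (star γ * α))
          - conj q • ((star α * γ) * (α * star γ))
          - (q • ((γ * star α) * (star γ * α)) - (γ * star α) * (α * star γ)) := by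
      rw [hse, he, sub_mul, mul_sub, mul_sub]
      simp only [smul_mul_assoc, mul_smul_comm, smul_smul]
      rw [mul_comm q (conj q)]
    rw [expand, c1, c2, c3, c4]
    abel
  have he0 : e = 0 := by
    have hn : ‖e‖ * ‖e‖ = 0 := by
      rw [← CStarRing.norm_star_mul_self, key, norm_zero]
    exact norm_eq_zero.mp (mul_self_eq_zero.mp hn)
  have hq' : q • (star γ * α) = α * star γ := by
    have := sub_eq_zero.mp he0
    exact this
  exact (eq_inv_smul_iff₀ hq).mpr hq'

end Algebraic

section Modules

variable (α γ : A)

/-- The star subalgebra generated by `α γ*` and `γ* γ`. -/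
def Gs : StarSubalgebra ℂ A := StarAlgebra.adjoin ℂ {α * star γ, star γ * γ}

/-- Words in the letters `α`, `γ`. -/
def Letters (w : List A) : Prop := ∀ l ∈ w, l = α ∨ l = γ

/-- Weight `p` part (nonnegative weights): span of `x * w` with `x ∈ Gs`, `w` a word of
length `p`. -/
noncomputable def W (p : ℕ) : Submodule ℂ A :=
  Submodule.span ℂ {y | ∃ x ∈ Gs α γ, ∃ w : List A, Letters α γ w ∧ w.length = p ∧ y = x * w.prod}

/-- Weight `-p` part. -/
def SW (p : ℕ) : Submodule ℂ A where
  carrier := {a | star a ∈ W α γ p}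
  add_mem' := by
    intro a b ha hb
    simp only [Set.mem_setOf_eq, star_add] at *
    exact add_mem ha hb
  zero_mem' := by simp only [Set.mem_setOf_eq, star_zero]; exact zero_mem _
  smul_mem' := by
    intro c a ha
    simp only [Set.mem_setOf_eq, star_smul] at *
    exact Submodule.smul_mem _ _ ha

variable {α γ}

lemma mem_SW {a : A} {p : ℕ} : a ∈ SW α γ p ↔ star a ∈ W α γ p := Iff.rfl

lemma b_mem : α * star γ ∈ Gs α γ :=
  StarAlgebra.subset_adjoin ℂ _ (by simp)

lemma n_mem : star γ * γ ∈ Gs α γ :=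
  StarAlgebra.subset_adjoin ℂ _ (by simp)

lemma starb_mem : γ * star α ∈ Gs α γ := by
  have := star_mem (s := Gs α γ) b_mem
  simpa [star_mul, star_star] using this

lemma mem_W_of {x : A} {w : List A} (hx : x ∈ Gs α γ) (hw : Letters α γ w) :
    x * w.prod ∈ W α γ w.length :=
  Submodule.subset_span ⟨x, hx, w, hw, rfl, rfl⟩

lemma letters_single {l : A} (hl : l = α ∨ l = γ) : Letters α γ [l] := by
  intro l' hl'
  simp only [List.mem_singleton] at hl'
  exact hl' ▸ hl

lemma mem_W1_of {x l : A} (hx : x ∈ Gs α γ) (hl : l = α ∨ l = γ) : x * l ∈ W α γ 1 := by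
  have h1 : x * l = x * ([l].prod) := by simp
  have := mem_W_of hx (letters_single hl)
  simpa using this

/-- Induction principle for `Gs`. -/
@[elab_as_elim]
lemma Gs_induction {P : A → Prop}
    (hb : P (α * star γ)) (hn : P (star γ * γ)) (hsb : P (γ * star α))
    (halg : ∀ c : ℂ, P (algebraMap ℂ A c))
    (hadd : ∀ x y, P x → P y → P (x + y))
    (hmul : ∀ x y, x ∈ Gs α γ → y ∈ Gs α γ → P x → P y → P (x * y))
    {g : A} (hg : g ∈ Gs α γ) : P g := by
  have hg' : g ∈ Algebra.adjoin ℂ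
      ({α * star γ, star γ * γ} ∪ star {α * star γ, star γ * γ} : Set A) := hg
  have main : g ∈ Gs α γ ∧ P g := by
    induction hg' using Algebra.adjoin_induction with
    | mem x hx =>
      rcases hx with hx | hx
      · rcases hx with rfl | hx
        · exact ⟨b_mem, hb⟩
        · rw [Set.mem_singleton_iff] at hx
          exact ⟨hx ▸ n_mem, hx ▸ hn⟩
      · rw [Set.mem_star] at hx
        rcases hx with hx | hx
        · have hx' : x = γ * star α := by
            have := congrArg star hx
            simpa [star_mul, star_star] using this
          exact ⟨hx' ▸ starb_mem, hx' ▸ hsb⟩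
        · rw [Set.mem_singleton_iff] at hx
          have hx' : x = star γ * γ := by
            have := congrArg star hx
            simpa [star_mul, star_star] using this
          exact ⟨hx' ▸ n_mem, hx' ▸ hn⟩
    | algebraMap c => exact ⟨algebraMap_mem _ c, halg c⟩
    | add x y hx hy ihx ihy => exact ⟨add_mem (ihx hx).1 (ihy hy).1, hadd x y (ihx hx).2 (ihy hy).2⟩
    | mul x y hx hy ihx ihy => exact ⟨mul_mem (ihx hx).1 (ihy hy).1, hmul x y (ihx hx).1 (ihy hy).1 (ihx hx).2 (ihy hy).2⟩
  exact main.2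

/-- Weight one part, letter-first form. -/
noncomputable def L (α γ : A) : Submodule ℂ A :=
  Submodule.span ℂ {y | ∃ x ∈ Gs α γ, y = α * x ∨ y = γ * x}

/-- Weight minus-one part, `Gs`-first form. -/
noncomputable def SL (α γ : A) : Submodule ℂ A :=
  Submodule.span ℂ {y | ∃ x ∈ Gs α γ, y = x * star α ∨ y = x * star γ}

lemma mul_Gs_W {x u : A} {p : ℕ} (hx : x ∈ Gs α γ) (hu : u ∈ W α γ p) : x * u ∈ W α γ p := by
  induction hu using Submodule.span_induction with
  | mem y hy =>
    obtain ⟨x', hx', w, hw, hlen, rfl⟩ := hy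
    rw [← mul_assoc]
    exact hlen ▸ mem_W_of (mul_mem hx hx') hw
  | zero => simpa using zero_mem _
  | add u v hu hv ihu ihv => rw [mul_add]; exact add_mem ihu ihv
  | smul c u hu ihu => rw [mul_smul_comm]; exact Submodule.smul_mem _ _ ihu

lemma L_mul_Gs {u x : A} (hx : x ∈ Gs α γ) (hu : u ∈ L α γ) : u * x ∈ L α γ := by
  induction hu using Submodule.span_induction with
  | mem y hy =>
    obtain ⟨x', hx', hy⟩ := hy
    rcases hy with rfl | rfl <;>
      [exact Submodule.subset_span ⟨x' * x, mul_mem hx' hx, Or.inl (mul_assoc _ _ _)⟩;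
       exact Submodule.subset_span ⟨x' * x, mul_mem hx' hx, Or.inr (mul_assoc _ _ _)⟩]
  | zero => simpa using zero_mem _
  | add u v hu hv ihu ihv => rw [add_mul]; exact add_mem ihu ihv
  | smul c u hu ihu => rw [smul_mul_assoc]; exact Submodule.smul_mem _ _ ihu

section Identities

variable {q : ℂ}

lemma hkey' (hq : q ≠ 0) (h : SUq2Rel q α γ) :
    star α * γ = (conj q)⁻¹ • (γ * star α) := by
  have := congrArg star (hkey hq h)
  simpa [star_mul, star_star, star_smul, map_inv₀] using this

lemma conj_ne_zero (hq : q ≠ 0) : (conj q : ℂ) ≠ 0 := by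
  rw [← Complex.star_def]
  exact star_ne_zero.mpr hq

lemma i3 (hq : q ≠ 0) (h : SUq2Rel q α γ) :
    α * (α * star γ) = q • ((α * star γ) * α) := by
  have h5 := hkey hq h
  have e : (α * star γ) * α = q⁻¹ • (α * (α * star γ)) := by
    rw [mul_assoc, h5]
    simp only [mul_smul_comm]
  rw [e, smul_smul, mul_inv_cancel₀ hq, one_smul]

lemma i4 (hq : q ≠ 0) (h : SUq2Rel q α γ) :
    γ * (α * star γ) = q • ((star γ * γ) * α) := by
  have hga : γ * α = (conj q)⁻¹ • (α * γ) :=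
    (eq_inv_smul_iff₀ (conj_ne_zero hq)).mpr h.2.2.1.symm
  calc γ * (α * star γ) = (γ * α) * star γ := (mul_assoc _ _ _).symm
    _ = (conj q)⁻¹ • (α * (γ * star γ)) := by
        rw [hga]; simp only [smul_mul_assoc, mul_assoc]
    _ = (conj q)⁻¹ • (α * (star γ * γ)) := by rw [h.2.2.2]
    _ = (conj q)⁻¹ • ((conj q * q) • ((star γ * γ) * α)) := by rw [alpha_nn h]
    _ = q • ((star γ * γ) * α) := by
        rw [smul_smul, inv_mul_cancel_left₀ (conj_ne_zero hq)]

lemma i5 (hq : q ≠ 0) (h : SUq2Rel q α γ) :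
    α * (γ * star α) = conj q • ((1 - (conj q * q) • (star γ * γ)) * γ) := by
  calc α * (γ * star α) = (α * γ) * star α := (mul_assoc _ _ _).symm
    _ = conj q • (γ * (α * star α)) := by
        rw [h.2.2.1]; simp only [smul_mul_assoc, mul_assoc]
    _ = conj q • (γ * (1 - (conj q * q) • (star γ * γ))) := by rw [h2' h]
    _ = conj q • ((1 - (conj q * q) • (star γ * γ)) * γ) := by
        congr 1
        rw [mul_sub, sub_mul, mul_one, one_mul, mul_smul_comm, smul_mul_assoc, gamma_nn h]

lemma i6 (hq : q ≠ 0) (h : SUq2Rel q α γ) :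
    γ * (γ * star α) = conj q • ((γ * star α) * γ) := by
  have h5' := hkey' hq h
  have e : (γ * star α) * γ = (conj q)⁻¹ • (γ * (γ * star α)) := by
    rw [mul_assoc, h5']
    simp only [mul_smul_comm]
  rw [e, smul_smul, mul_inv_cancel₀ (conj_ne_zero hq), one_smul]

lemma j1 (hq : q ≠ 0) (h : SUq2Rel q α γ) :
    (star γ * γ) * α = (conj q * q)⁻¹ • (α * (star γ * γ)) :=
  (eq_inv_smul_iff₀ (mul_ne_zero (conj_ne_zero hq) hq)).mpr (alpha_nn h).symm

lemma j3 (hq : q ≠ 0) (h : SUq2Rel q α γ) :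
    (α * star γ) * α = q⁻¹ • (α * (α * star γ)) := by
  rw [mul_assoc, hkey hq h]
  simp only [mul_smul_comm]

lemma j5 (h : SUq2Rel q α γ) :
    (γ * star α) * α = γ * (1 - star γ * γ) := by
  rw [mul_assoc, h1' h]

lemma j6 (hq : q ≠ 0) (h : SUq2Rel q α γ) :
    (γ * star α) * γ = (conj q)⁻¹ • (γ * (γ * star α)) := by
  rw [mul_assoc, hkey' hq h]
  simp only [mul_smul_comm]

/-- Moving a letter to the left of an element of `Gs`, landing in `W 1`. -/
lemma letter_mul_Gs (hq : q ≠ 0) (h : SUq2Rel q α γ) {g : A} (hg : g ∈ Gs α γ) :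
    α * g ∈ W α γ 1 ∧ γ * g ∈ W α γ 1 := by
  refine Gs_induction (P := fun g => α * g ∈ W α γ 1 ∧ γ * g ∈ W α γ 1) ?hb ?hn ?hsb ?halg ?hadd ?hmul hg
  case hb =>
    constructor
    · rw [i3 hq h]
      exact Submodule.smul_mem _ _ (mem_W1_of b_mem (Or.inl rfl))
    · rw [i4 hq h]
      exact Submodule.smul_mem _ _ (mem_W1_of n_mem (Or.inl rfl))
  case hn =>
    constructor
    · rw [alpha_nn h]
      exact Submodule.smul_mem _ _ (mem_W1_of n_mem (Or.inl rfl))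
    · rw [gamma_nn h]
      exact mem_W1_of n_mem (Or.inr rfl)
  case hsb =>
    constructor
    · rw [i5 hq h]
      refine Submodule.smul_mem _ _ (mem_W1_of ?_ (Or.inr rfl))
      exact sub_mem (one_mem _) (SMulMemClass.smul_mem _ n_mem)
    · rw [i6 hq h]
      exact Submodule.smul_mem _ _ (mem_W1_of starb_mem (Or.inr rfl))
  case halg =>
    intro c
    have e1 : α * (algebraMap ℂ A c) = c • ((1 : A) * α) := by
      rw [Algebra.algebraMap_eq_smul_one, mul_smul_comm, mul_one, one_mul]
    have e2 : γ * (algebraMap ℂ A c) = c • ((1 : A) * γ) := by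
      rw [Algebra.algebraMap_eq_smul_one, mul_smul_comm, mul_one, one_mul]
    exact ⟨e1 ▸ Submodule.smul_mem _ _ (mem_W1_of (one_mem _) (Or.inl rfl)),
      e2 ▸ Submodule.smul_mem _ _ (mem_W1_of (one_mem _) (Or.inr rfl))⟩
  case hadd =>
    intro x y ihx ihy
    exact ⟨by rw [mul_add]; exact add_mem ihx.1 ihy.1,
      by rw [mul_add]; exact add_mem ihx.2 ihy.2⟩
  case hmul =>
    intro x y hx hy ihx ihy
    have main : ∀ u ∈ W α γ 1, u * y ∈ W α γ 1 := by
      intro u hu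
      induction hu using Submodule.span_induction with
      | mem z hz =>
        obtain ⟨x', hx', w, hw, hlen, rfl⟩ := hz
        obtain ⟨l, rfl⟩ := List.length_eq_one_iff.mp hlen
        have hl := hw l (List.mem_singleton_self l)
        have e : (x' * [l].prod) * y = x' * (l * y) := by
          simp [mul_assoc]
        rw [e]
        rcases hl with rfl | rfl
        · exact mul_Gs_W hx' ihy.1
        · exact mul_Gs_W hx' ihy.2
      | zero => simpa using zero_mem _
      | add u v hu hv ihu ihv => rw [add_mul]; exact add_mem ihu ihv
      | smul c u hu ihu => rw [smul_mul_assoc]; exact Submodule.smul_mem _ _ ihu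
    exact ⟨by rw [← mul_assoc]; exact main _ ihx.1,
      by rw [← mul_assoc]; exact main _ ihx.2⟩

/-- Moving a letter to the right of an element of `Gs`, landing in `L`. -/
lemma Gs_mul_letter (hq : q ≠ 0) (h : SUq2Rel q α γ) {g : A} (hg : g ∈ Gs α γ) :
    g * α ∈ L α γ ∧ g * γ ∈ L α γ := by
  have memL : ∀ {x l : A}, x ∈ Gs α γ → (l = α ∨ l = γ) → l * x ∈ L α γ := by
    intro x l hx hl
    rcases hl with rfl | rfl
    · exact Submodule.subset_span ⟨x, hx, Or.inl rfl⟩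
    · exact Submodule.subset_span ⟨x, hx, Or.inr rfl⟩
  refine Gs_induction (P := fun g => g * α ∈ L α γ ∧ g * γ ∈ L α γ) ?hb ?hn ?hsb ?halg ?hadd ?hmul hg
  case hb =>
    constructor
    · rw [j3 hq h]
      exact Submodule.smul_mem _ _ (memL b_mem (Or.inl rfl))
    · rw [mul_assoc]
      exact memL n_mem (Or.inl rfl)
  case hn =>
    constructor
    · rw [j1 hq h]
      exact Submodule.smul_mem _ _ (memL n_mem (Or.inl rfl))
    · rw [← gamma_nn h]
      exact memL n_mem (Or.inr rfl)
  case hsb =>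
    constructor
    · rw [j5 h]
      exact memL (sub_mem (one_mem _) n_mem) (Or.inr rfl)
    · rw [j6 hq h]
      exact Submodule.smul_mem _ _ (memL starb_mem (Or.inr rfl))
  case halg =>
    intro c
    have e1 : (algebraMap ℂ A c) * α = c • (α * (1 : A)) := by
      rw [Algebra.algebraMap_eq_smul_one, smul_mul_assoc, one_mul, mul_one]
    have e2 : (algebraMap ℂ A c) * γ = c • (γ * (1 : A)) := by
      rw [Algebra.algebraMap_eq_smul_one, smul_mul_assoc, one_mul, mul_one]
    exact ⟨e1 ▸ Submodule.smul_mem _ _ (memL (one_mem _) (Or.inl rfl)),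
      e2 ▸ Submodule.smul_mem _ _ (memL (one_mem _) (Or.inr rfl))⟩
  case hadd =>
    intro x y ihx ihy
    exact ⟨by rw [add_mul]; exact add_mem ihx.1 ihy.1,
      by rw [add_mul]; exact add_mem ihx.2 ihy.2⟩
  case hmul =>
    intro x y hx hy ihx ihy
    have main : ∀ u ∈ L α γ, x * u ∈ L α γ := by
      intro u hu
      induction hu using Submodule.span_induction with
      | mem z hz =>
        obtain ⟨x', hx', hz⟩ := hz
        rcases hz with rfl | rfl
        · rw [← mul_assoc]
          exact L_mul_Gs hx' ihx.1
        · rw [← mul_assoc]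
          exact L_mul_Gs hx' ihx.2
      | zero => simpa using zero_mem _
      | add u v hu hv ihu ihv => rw [mul_add]; exact add_mem ihu ihv
      | smul c u hu ihu => rw [mul_smul_comm]; exact Submodule.smul_mem _ _ ihu
    exact ⟨by rw [mul_assoc]; exact main _ ihy.1,
      by rw [mul_assoc]; exact main _ ihy.2⟩

lemma Gs_mem_W0 {x : A} (hx : x ∈ Gs α γ) : x ∈ W α γ 0 := by
  have := mem_W_of (w := ([] : List A)) hx (by intro l hl; simp at hl)
  simpa using this

lemma mem_W0 {u : A} : u ∈ W α γ 0 ↔ u ∈ Gs α γ := by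
  refine ⟨fun hu => ?_, Gs_mem_W0⟩
  induction hu using Submodule.span_induction with
  | mem y hy =>
    obtain ⟨x, hx, w, hw, hlen, rfl⟩ := hy
    rw [List.length_eq_zero_iff] at hlen
    subst hlen
    simpa using hx
  | zero => exact zero_mem _
  | add u v hu hv ihu ihv => exact add_mem ihu ihv
  | smul c u hu ihu => exact SMulMemClass.smul_mem _ ihu

lemma mem_SW0 {u : A} : u ∈ SW α γ 0 ↔ u ∈ W α γ 0 := by
  rw [mem_SW, mem_W0, mem_W0]
  exact ⟨fun hu => by simpa using star_mem hu, fun hu => star_mem hu⟩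

lemma W_star_mem_SW {u : A} {p : ℕ} (hu : u ∈ W α γ p) : star u ∈ SW α γ p := by
  rw [mem_SW, star_star]
  exact hu

lemma letters_append {w w' : List A} (h1 : Letters α γ w) (h2 : Letters α γ w') :
    Letters α γ (w ++ w') := by
  intro l hl
  rcases List.mem_append.mp hl with hl | hl
  · exact h1 l hl
  · exact h2 l hl

lemma W_mul_word {u : A} {p : ℕ} (hu : u ∈ W α γ p) {w : List A} (hw : Letters α γ w) :
    u * w.prod ∈ W α γ (p + w.length) := by
  induction hu using Submodule.span_induction with
  | mem y hy =>
    obtain ⟨x, hx, w₀, hw₀, hlen, rfl⟩ := hy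
    have e : (x * w₀.prod) * w.prod = x * (w₀ ++ w).prod := by
      rw [List.prod_append, mul_assoc]
    rw [e]
    have := mem_W_of hx (letters_append hw₀ hw)
    rwa [List.length_append, hlen] at this
  | zero => simpa using zero_mem _
  | add u v hu hv ihu ihv => rw [add_mul]; exact add_mem ihu ihv
  | smul c u hu ihu => rw [smul_mul_assoc]; exact Submodule.smul_mem _ _ ihu

section Transfer

variable {q : ℂ}

lemma letter_mul_W (hq : q ≠ 0) (h : SUq2Rel q α γ) {l u : A} (hl : l = α ∨ l = γ)
    {p : ℕ} (hu : u ∈ W α γ p) : l * u ∈ W α γ (p + 1) := by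
  induction hu using Submodule.span_induction with
  | mem y hy =>
    obtain ⟨x, hx, w, hw, hlen, rfl⟩ := hy
    have hlx : l * x ∈ W α γ 1 := by
      rcases hl with rfl | rfl
      · exact (letter_mul_Gs hq h hx).1
      · exact (letter_mul_Gs hq h hx).2
    have e : l * (x * w.prod) = (l * x) * w.prod := (mul_assoc _ _ _).symm
    rw [e]
    have := W_mul_word hlx hw
    rwa [hlen, add_comm] at this
  | zero => simpa using zero_mem _
  | add u v hu hv ihu ihv => rw [mul_add]; exact add_mem ihu ihv
  | smul c u hu ihu => rw [mul_smul_comm]; exact Submodule.smul_mem _ _ ihu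

lemma word_mul_Gs (hq : q ≠ 0) (h : SUq2Rel q α γ) {w : List A} (hw : Letters α γ w)
    {g : A} (hg : g ∈ Gs α γ) : w.prod * g ∈ W α γ w.length := by
  induction w with
  | nil => simpa using Gs_mem_W0 hg
  | cons l w' ih =>
    have hl := hw l List.mem_cons_self
    have hw' : Letters α γ w' := fun l' hl' => hw l' (List.mem_cons_of_mem _ hl')
    have e : (l :: w').prod * g = l * (w'.prod * g) := by
      rw [List.prod_cons, mul_assoc]
    rw [e]
    exact letter_mul_W hq h hl (ih hw')

lemma W_mul_Gs (hq : q ≠ 0) (h : SUq2Rel q α γ) {u g : A} {p : ℕ}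
    (hu : u ∈ W α γ p) (hg : g ∈ Gs α γ) : u * g ∈ W α γ p := by
  induction hu using Submodule.span_induction with
  | mem y hy =>
    obtain ⟨x, hx, w, hw, hlen, rfl⟩ := hy
    rw [mul_assoc]
    exact hlen ▸ mul_Gs_W hx (word_mul_Gs hq h hw hg)
  | zero => simpa using zero_mem _
  | add u v hu hv ihu ihv => rw [add_mul]; exact add_mem ihu ihv
  | smul c u hu ihu => rw [smul_mul_assoc]; exact Submodule.smul_mem _ _ ihu

lemma letter_mul_star_letter (hq : q ≠ 0) (h : SUq2Rel q α γ) {l l' : A}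
    (hl : l = α ∨ l = γ) (hl' : l' = α ∨ l' = γ) : l * star l' ∈ Gs α γ := by
  rcases hl with rfl | rfl <;> rcases hl' with rfl | rfl
  · rw [h2' h]
    exact sub_mem (one_mem _) (SMulMemClass.smul_mem _ n_mem)
  · exact b_mem
  · exact starb_mem
  · rw [h.2.2.2]
    exact n_mem

lemma star_letter_mul_letter (hq : q ≠ 0) (h : SUq2Rel q α γ) {l l' : A}
    (hl : l = α ∨ l = γ) (hl' : l' = α ∨ l' = γ) : star l * l' ∈ Gs α γ := by
  rcases hl with rfl | rfl <;> rcases hl' with rfl | rfl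
  · rw [h1' h]
    exact sub_mem (one_mem _) n_mem
  · rw [hkey' hq h]
    exact SMulMemClass.smul_mem _ starb_mem
  · rw [hkey hq h]
    exact SMulMemClass.smul_mem _ b_mem
  · exact n_mem

lemma W_mul_star_letter (hq : q ≠ 0) (h : SUq2Rel q α γ) {l u : A}
    (hl : l = α ∨ l = γ) {p : ℕ} (hu : u ∈ W α γ (p + 1)) : u * star l ∈ W α γ p := by
  induction hu using Submodule.span_induction with
  | mem y hy =>
    obtain ⟨x, hx, w, hw, hlen, rfl⟩ := hy
    rcases List.eq_nil_or_concat' w with rfl | ⟨w₀, l₀, rfl⟩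
    · simp at hlen
    · have hl₀ : l₀ = α ∨ l₀ = γ := hw l₀ (by simp)
      have hw₀ : Letters α γ w₀ := fun l' hl' => hw l' (by simp [hl'])
      have hlen₀ : w₀.length = p := by
        simpa using hlen
      have e : (x * (w₀ ++ [l₀]).prod) * star l = x * (w₀.prod * (l₀ * star l)) := by
        rw [List.prod_append, List.prod_singleton]
        noncomm_ring
      rw [e]
      refine mul_Gs_W hx ?_
      exact hlen₀ ▸ word_mul_Gs hq h hw₀ (letter_mul_star_letter hq h hl₀ hl)
  | zero => simpa using zero_mem _
  | add u v hu hv ihu ihv => rw [add_mul]; exact add_mem ihu ihv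
  | smul c u hu ihu => rw [smul_mul_assoc]; exact Submodule.smul_mem _ _ ihu

lemma star_L_mem_SL {u : A} (hu : u ∈ L α γ) : star u ∈ SL α γ := by
  induction hu using Submodule.span_induction with
  | mem y hy =>
    obtain ⟨x, hx, hy⟩ := hy
    rcases hy with rfl | rfl
    · exact Submodule.subset_span ⟨star x, star_mem hx, Or.inl (star_mul _ _)⟩
    · exact Submodule.subset_span ⟨star x, star_mem hx, Or.inr (star_mul _ _)⟩
  | zero => simpa using zero_mem _
  | add u v hu hv ihu ihv => rw [star_add]; exact add_mem ihu ihv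
  | smul c u hu ihu => rw [star_smul]; exact Submodule.smul_mem _ _ ihu

lemma star_letter_mul_Gs (hq : q ≠ 0) (h : SUq2Rel q α γ) {l x : A}
    (hl : l = α ∨ l = γ) (hx : x ∈ Gs α γ) : star l * x ∈ SL α γ := by
  have e : star l * x = star (star x * l) := by
    rw [star_mul, star_star]
  rw [e]
  refine star_L_mem_SL ?_
  rcases hl with rfl | rfl
  · exact (Gs_mul_letter hq h (star_mem hx)).1
  · exact (Gs_mul_letter hq h (star_mem hx)).2

lemma SL_mul_word_W (hq : q ≠ 0) (h : SUq2Rel q α γ) {v l₀ : A} {w₁ : List A}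
    (hv : v ∈ SL α γ) (hl₀ : l₀ = α ∨ l₀ = γ) (hw₁ : Letters α γ w₁) :
    v * (l₀ * w₁.prod) ∈ W α γ w₁.length := by
  induction hv using Submodule.span_induction with
  | mem v hv =>
    obtain ⟨x', hx', hv⟩ := hv
    rcases hv with rfl | rfl
    · have e2 : (x' * star α) * (l₀ * w₁.prod) = x' * ((star α * l₀) * w₁.prod) := by
        noncomm_ring
      rw [e2]
      refine mul_Gs_W hx' ?_
      simpa using W_mul_word (Gs_mem_W0 (star_letter_mul_letter hq h (Or.inl rfl) hl₀)) hw₁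
    · have e2 : (x' * star γ) * (l₀ * w₁.prod) = x' * ((star γ * l₀) * w₁.prod) := by
        noncomm_ring
      rw [e2]
      refine mul_Gs_W hx' ?_
      simpa using W_mul_word (Gs_mem_W0 (star_letter_mul_letter hq h (Or.inr rfl) hl₀)) hw₁
  | zero => simpa using zero_mem _
  | add u v hu hv ihu ihv => rw [add_mul]; exact add_mem ihu ihv
  | smul c u hu ihu => rw [smul_mul_assoc]; exact Submodule.smul_mem _ _ ihu

lemma star_letter_mul_W (hq : q ≠ 0) (h : SUq2Rel q α γ) {l u : A}
    (hl : l = α ∨ l = γ) {p : ℕ} (hu : u ∈ W α γ (p + 1)) : star l * u ∈ W α γ p := by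
  induction hu using Submodule.span_induction with
  | mem y hy =>
    obtain ⟨x, hx, w, hw, hlen, rfl⟩ := hy
    rcases w with _ | ⟨l₀, w₁⟩
    · simp at hlen
    · have hl₀ : l₀ = α ∨ l₀ = γ := hw l₀ List.mem_cons_self
      have hw₁ : Letters α γ w₁ := fun l' hl' => hw l' (List.mem_cons_of_mem _ hl')
      have hlen₁ : w₁.length = p := by simpa using hlen
      have e : star l * (x * (l₀ :: w₁).prod) = (star l * x) * (l₀ * w₁.prod) := by
        rw [List.prod_cons]
        noncomm_ring
      rw [e]
      exact hlen₁ ▸ SL_mul_word_W hq h (star_letter_mul_Gs hq h hl hx) hl₀ hw₁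
  | zero => simpa using zero_mem _
  | add u v hu hv ihu ihv => rw [mul_add]; exact add_mem ihu ihv
  | smul c u hu ihu => rw [mul_smul_comm]; exact Submodule.smul_mem _ _ ihu

lemma SW_mul_star_letter (hq : q ≠ 0) (h : SUq2Rel q α γ) {l u : A}
    (hl : l = α ∨ l = γ) {p : ℕ} (hu : u ∈ SW α γ p) : u * star l ∈ SW α γ (p + 1) := by
  rw [mem_SW] at hu ⊢
  have e : star (u * star l) = l * star u := by
    rw [star_mul, star_star]
  rw [e]
  exact letter_mul_W hq h hl hu

lemma SW_mul_letter (hq : q ≠ 0) (h : SUq2Rel q α γ) {l u : A}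
    (hl : l = α ∨ l = γ) {p : ℕ} (hu : u ∈ SW α γ (p + 1)) : u * l ∈ SW α γ p := by
  rw [mem_SW] at hu ⊢
  rw [star_mul]
  exact star_letter_mul_W hq h hl hu

lemma SW_mul_Gs (hq : q ≠ 0) (h : SUq2Rel q α γ) {u g : A} {p : ℕ}
    (hu : u ∈ SW α γ p) (hg : g ∈ Gs α γ) : u * g ∈ SW α γ p := by
  rw [mem_SW] at hu ⊢
  rw [star_mul]
  exact mul_Gs_W (star_mem hg) hu

lemma W0_mul_star_letter (hq : q ≠ 0) (h : SUq2Rel q α γ) {l u : A}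
    (hl : l = α ∨ l = γ) (hu : u ∈ W α γ 0) : u * star l ∈ SW α γ 1 := by
  have : u ∈ SW α γ 0 := mem_SW0.mpr hu
  simpa using SW_mul_star_letter hq h hl this

end Transfer

section Grading

variable (α γ) in
/-- The weight-`k` part of the algebra generated by `α`, `γ`. -/
noncomputable def V (k : ℤ) : Submodule ℂ A := if 0 ≤ k then W α γ k.toNat else SW α γ (-k).toNat

lemma V_nonneg {k : ℤ} (hk : 0 ≤ k) : V α γ k = W α γ k.toNat := if_pos hk

lemma V_neg {k : ℤ} (hk : k < 0) : V α γ k = SW α γ (-k).toNat := if_neg (not_le.mpr hk)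

lemma V_zero : V α γ 0 = W α γ 0 := if_pos le_rfl

variable {q : ℂ}

lemma V_mul_letter (hq : q ≠ 0) (h : SUq2Rel q α γ) {l u : A} (hl : l = α ∨ l = γ)
    {k : ℤ} (hu : u ∈ V α γ k) : u * l ∈ V α γ (k + 1) := by
  rcases le_or_gt 0 k with hk | hk
  · rw [V_nonneg hk] at hu
    rw [V_nonneg (by omega)]
    have hidx : (k + 1).toNat = k.toNat + 1 := by omega
    rw [hidx]
    simpa using W_mul_word hu (letters_single hl)
  · rw [V_neg hk] at hu
    have hidx : (-k).toNat = (-(k + 1)).toNat + 1 := by omega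
    rw [hidx] at hu
    have := SW_mul_letter hq h hl hu
    rcases lt_or_eq_of_le (by omega : k + 1 ≤ 0) with hk1 | hk1
    · rwa [V_neg (by omega)]
    · have h0 : u * l ∈ SW α γ 0 := by
        rw [hk1] at this
        simpa using this
      rw [hk1, V_zero]
      exact mem_SW0.mp h0

lemma V_mul_star_letter (hq : q ≠ 0) (h : SUq2Rel q α γ) {l u : A} (hl : l = α ∨ l = γ)
    {k : ℤ} (hu : u ∈ V α γ k) : u * star l ∈ V α γ (k - 1) := by
  rcases lt_or_ge 0 k with hk | hk
  · rw [V_nonneg (by omega)] at hu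
    rw [V_nonneg (by omega)]
    have hidx : k.toNat = (k - 1).toNat + 1 := by omega
    rw [hidx] at hu
    exact W_mul_star_letter hq h hl hu
  · have hu' : u ∈ SW α γ (-k).toNat := by
      rcases lt_or_eq_of_le hk with hk' | hk'
      · rwa [V_neg hk'] at hu
      · rw [hk'] at hu ⊢
        rw [V_zero] at hu
        simpa using mem_SW0.mpr hu
    have := SW_mul_star_letter hq h hl hu'
    rw [V_neg (by omega)]
    have hidx : (-(k - 1)).toNat = (-k).toNat + 1 := by omega
    rwa [hidx]

lemma V_mul_Gs (hq : q ≠ 0) (h : SUq2Rel q α γ) {u g : A} {k : ℤ}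
    (hu : u ∈ V α γ k) (hg : g ∈ Gs α γ) : u * g ∈ V α γ k := by
  rcases le_or_gt 0 k with hk | hk
  · rw [V_nonneg hk] at hu ⊢
    exact W_mul_Gs hq h hu hg
  · rw [V_neg hk] at hu ⊢
    exact SW_mul_Gs hq h hu hg

lemma V_star {u : A} {k : ℤ} (hu : u ∈ V α γ k) : star u ∈ V α γ (-k) := by
  rcases lt_trichotomy k 0 with hk | rfl | hk
  · rw [V_neg hk, mem_SW] at hu
    rwa [V_nonneg (by omega)]
  · rw [show -(0:ℤ) = 0 by ring, V_zero, mem_W0] at *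
    exact star_mem hu
  · rw [V_nonneg (le_of_lt hk)] at hu
    rw [V_neg (by omega)]
    simpa using W_star_mem_SW hu

lemma V_mul_word (hq : q ≠ 0) (h : SUq2Rel q α γ) {u : A} {k : ℤ}
    (hu : u ∈ V α γ k) {w : List A} (hw : Letters α γ w) :
    u * w.prod ∈ V α γ (k + w.length) := by
  induction w generalizing u k with
  | nil => simpa using hu
  | cons l w' ih =>
    have hl := hw l List.mem_cons_self
    have hw' : Letters α γ w' := fun l' hl' => hw l' (List.mem_cons_of_mem _ hl')
    have e : u * (l :: w').prod = (u * l) * w'.prod := by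
      rw [List.prod_cons, mul_assoc]
    rw [e]
    have := ih (V_mul_letter hq h hl hu) hw'
    have hidx : k + 1 + (w'.length : ℤ) = k + ((l :: w').length : ℤ) := by
      simp only [List.length_cons]
      push_cast
      ring
    rwa [hidx] at this

lemma V_mul_star_word (hq : q ≠ 0) (h : SUq2Rel q α γ) {u : A} {k : ℤ}
    (hu : u ∈ V α γ k) {w : List A} (hw : Letters α γ w) :
    u * star w.prod ∈ V α γ (k - w.length) := by
  induction w generalizing u k with
  | nil => simpa using hu
  | cons l w' ih =>
    have hl := hw l List.mem_cons_self
    have hw' : Letters α γ w' := fun l' hl' => hw l' (List.mem_cons_of_mem _ hl')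
    have e : u * star ((l :: w').prod) = (u * star w'.prod) * star l := by
      rw [List.prod_cons, star_mul, mul_assoc]
    rw [e]
    have := V_mul_star_letter hq h hl (ih hu hw')
    have hidx : k - w'.length - 1 = k - ((l :: w').length : ℤ) := by
      simp only [List.length_cons]
      push_cast
      ring
    rwa [hidx] at this

lemma V_mul (hq : q ≠ 0) (h : SUq2Rel q α γ) {u v : A} {k m : ℤ}
    (hu : u ∈ V α γ k) (hv : v ∈ V α γ m) : u * v ∈ V α γ (k + m) := by
  rcases le_or_gt 0 m with hm | hm
  · rw [V_nonneg hm] at hv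
    induction hv using Submodule.span_induction with
    | mem y hy =>
      obtain ⟨x, hx, w, hw, hlen, rfl⟩ := hy
      rw [← mul_assoc]
      have := V_mul_word hq h (V_mul_Gs hq h hu hx) hw
      rwa [hlen, Int.toNat_of_nonneg hm] at this
    | zero => simpa using zero_mem _
    | add a b ha hb iha ihb => rw [mul_add]; exact add_mem iha ihb
    | smul c a ha iha => rw [mul_smul_comm]; exact Submodule.smul_mem _ _ iha
  · rw [V_neg hm, mem_SW] at hv
    have main : ∀ y ∈ W α γ (-m).toNat, u * star y ∈ V α γ (k + m) := by
      intro y hy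
      induction hy using Submodule.span_induction with
      | mem y hy =>
        obtain ⟨x, hx, w, hw, hlen, rfl⟩ := hy
        have e : u * star (x * w.prod) = (u * star w.prod) * star x := by
          rw [star_mul, mul_assoc]
        rw [e]
        refine V_mul_Gs hq h ?_ (star_mem hx)
        have := V_mul_star_word hq h hu hw
        have hidx : k - (w.length : ℤ) = k + m := by
          rw [hlen]
          omega
        rwa [hidx] at this
      | zero => simpa using zero_mem _
      | add a b ha hb iha ihb =>
        rw [star_add, mul_add]
        exact add_mem iha ihb
      | smul c a ha iha =>
        rw [star_smul, mul_smul_comm]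
        exact Submodule.smul_mem _ _ iha
    have := main _ hv
    rwa [star_star] at this

lemma one_mem_V0 : (1 : A) ∈ V α γ 0 := by
  rw [V_zero]
  exact Gs_mem_W0 (one_mem _)

lemma alpha_mem_V1 : α ∈ V α γ 1 := by
  rw [V_nonneg (by omega)]
  have := mem_W1_of (one_mem (Gs α γ)) (Or.inl rfl)
  simpa using this

lemma gamma_mem_V1 : γ ∈ V α γ 1 := by
  rw [V_nonneg (by omega)]
  have := mem_W1_of (one_mem (Gs α γ)) (Or.inr rfl)
  simpa using this

variable (α γ) in
/-- The span of all the weight parts. -/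
noncomputable def M : Submodule ℂ A := ⨆ k : ℤ, V α γ k

lemma V_le_M (k : ℤ) : V α γ k ≤ M α γ := le_iSup (V α γ) k

lemma M_mul (hq : q ≠ 0) (h : SUq2Rel q α γ) {a b : A}
    (ha : a ∈ M α γ) (hb : b ∈ M α γ) : a * b ∈ M α γ := by
  refine Submodule.iSup_induction (motive := fun a => a * b ∈ M α γ) _ ha ?_ (by simp [zero_mem]) ?_
  · intro k x hx
    refine Submodule.iSup_induction (motive := fun b => x * b ∈ M α γ) _ hb ?_ (by simp [zero_mem]) ?_
    · intro m y hy
      exact V_le_M (k + m) (V_mul hq h hx hy)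
    · intro y z hy hz
      rw [mul_add]
      exact add_mem hy hz
  · intro x y hx hy
    rw [add_mul]
    exact add_mem hx hy

lemma M_star {a : A} (ha : a ∈ M α γ) : star a ∈ M α γ := by
  refine Submodule.iSup_induction (motive := fun a => star a ∈ M α γ) _ ha ?_ (by simp [zero_mem]) ?_
  · intro k x hx
    exact V_le_M (-k) (V_star hx)
  · intro x y hx hy
    rw [star_add]
    exact add_mem hx hy

lemma adjoin_le_M (hq : q ≠ 0) (h : SUq2Rel q α γ) {a : A}
    (ha : a ∈ StarAlgebra.adjoin ℂ {α, γ}) : a ∈ M α γ := by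
  induction ha using StarAlgebra.adjoin_induction with
  | mem x hx =>
    rcases hx with rfl | hx
    · exact V_le_M 1 alpha_mem_V1
    · rw [Set.mem_singleton_iff] at hx
      exact hx ▸ V_le_M 1 gamma_mem_V1
  | algebraMap c =>
    rw [Algebra.algebraMap_eq_smul_one]
    exact Submodule.smul_mem _ _ (V_le_M 0 one_mem_V0)
  | add x y hx hy ihx ihy => exact add_mem ihx ihy
  | mul x y hx hy ihx ihy => exact M_mul hq h ihx ihy
  | star x hx ihx => exact M_star ihx

end Grading

end Identities

section Action

variable (σ : Circle → A ≃⋆ₐ[ℂ] A)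

lemma Gs_fixed (hα : ∀ z : Circle, σ z α = (z : ℂ) • α)
    (hγ : ∀ z : Circle, σ z γ = (z : ℂ) • γ) (z : Circle)
    {g : A} (hg : g ∈ Gs α γ) : σ z g = g := by
  have hz : (z : ℂ) * star (z : ℂ) = 1 := by
    rw [Complex.star_def, Complex.mul_conj]
    norm_cast
    simp
  have hz' : star (z : ℂ) * (z : ℂ) = 1 := by rwa [mul_comm] at hz
  refine Gs_induction (P := fun g => σ z g = g) ?_ ?_ ?_ ?_ ?_ ?_ hg
  · show σ z (α * star γ) = α * star γ
    rw [map_mul, map_star, hα z, hγ z, star_smul, smul_mul_assoc, mul_smul_comm,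
      smul_smul, hz, one_smul]
  · show σ z (star γ * γ) = star γ * γ
    rw [map_mul, map_star, hγ z, star_smul, smul_mul_assoc, mul_smul_comm,
      smul_smul, hz', one_smul]
  · show σ z (γ * star α) = γ * star α
    rw [map_mul, map_star, hγ z, hα z, star_smul, smul_mul_assoc, mul_smul_comm,
      smul_smul, hz, one_smul]
  · intro c
    show σ z (algebraMap ℂ A c) = algebraMap ℂ A c
    rw [Algebra.algebraMap_eq_smul_one, map_smul, map_one]
  · intro x y ihx ihy
    show σ z (x + y) = x + y
    rw [map_add, ihx, ihy]
  · intro x y hx hy ihx ihy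
    show σ z (x * y) = x * y
    rw [map_mul, ihx, ihy]

lemma word_wt (hα : ∀ z : Circle, σ z α = (z : ℂ) • α)
    (hγ : ∀ z : Circle, σ z γ = (z : ℂ) • γ) (z : Circle)
    {w : List A} (hw : Letters α γ w) :
    σ z w.prod = ((z : ℂ) ^ w.length) • w.prod := by
  induction w with
  | nil => simp
  | cons l w' ih =>
    have hl := hw l List.mem_cons_self
    have hw' : Letters α γ w' := fun l' hl' => hw l' (List.mem_cons_of_mem _ hl')
    have hσl : σ z l = (z : ℂ) • l := by
      rcases hl with rfl | rfl
      · exact hα z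
      · exact hγ z
    rw [List.prod_cons, map_mul, hσl, ih hw', List.length_cons, smul_mul_assoc,
      mul_smul_comm, smul_smul, pow_succ]
    congr 1
    ring

lemma W_wt (hα : ∀ z : Circle, σ z α = (z : ℂ) • α)
    (hγ : ∀ z : Circle, σ z γ = (z : ℂ) • γ) (z : Circle)
    {u : A} {p : ℕ} (hu : u ∈ W α γ p) :
    σ z u = ((z : ℂ) ^ p) • u := by
  induction hu using Submodule.span_induction with
  | mem y hy =>
    obtain ⟨x, hx, w, hw, hlen, rfl⟩ := hy
    rw [map_mul, Gs_fixed σ hα hγ z hx, word_wt σ hα hγ z hw, hlen, mul_smul_comm]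
  | zero => simp
  | add u v hu hv ihu ihv => rw [map_add, ihu, ihv, smul_add]
  | smul c u hu ihu => rw [map_smul, ihu, smul_comm]

lemma SW_wt (hα : ∀ z : Circle, σ z α = (z : ℂ) • α)
    (hγ : ∀ z : Circle, σ z γ = (z : ℂ) • γ) (z : Circle)
    {u : A} {p : ℕ} (hu : u ∈ SW α γ p) :
    σ z u = (((z : ℂ))⁻¹ ^ p) • u := by
  rw [mem_SW] at hu
  have h1 : σ z (star u) = ((z : ℂ) ^ p) • star u := W_wt σ hα hγ z hu
  rw [map_star] at h1
  have := congrArg star h1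
  rw [star_star, star_smul, star_star] at this
  rw [this]
  congr 1
  rw [star_pow]
  congr 1
  rw [Complex.star_def, ← Circle.coe_inv_eq_conj, Circle.coe_inv]

lemma V_wt (hα : ∀ z : Circle, σ z α = (z : ℂ) • α)
    (hγ : ∀ z : Circle, σ z γ = (z : ℂ) • γ) (z : Circle)
    {u : A} {k : ℤ} (hu : u ∈ V α γ k) :
    σ z u = ((z : ℂ) ^ k) • u := by
  rcases le_or_gt 0 k with hk | hk
  · rw [V_nonneg hk] at hu
    rw [W_wt σ hα hγ z hu]
    congr 1
    rw [← zpow_natCast, Int.toNat_of_nonneg hk]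
  · rw [V_neg hk] at hu
    rw [SW_wt σ hα hγ z hu]
    congr 1
    rw [inv_pow, ← zpow_natCast, Int.toNat_of_nonneg (by omega : (0:ℤ) ≤ -k), zpow_neg, inv_inv]

end Action

section Analysis

open MeasureTheory Real

variable (σ : Circle → A ≃⋆ₐ[ℂ] A)

/-- Averaging over the circle action. -/
noncomputable def E (a : A) : A :=
  (2 * π)⁻¹ • ∫ t in (0 : ℝ)..(2 * π), σ (Circle.exp t) a

variable {σ}

lemma cont_integrand (hcont : Continuous fun p : Circle × A => σ p.1 p.2) (a : A) :
    Continuous fun t : ℝ => σ (Circle.exp t) a :=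
  hcont.comp (Circle.exp.continuous.prodMk continuous_const)

lemma integrable_integrand (hcont : Continuous fun p : Circle × A => σ p.1 p.2) (a : A)
    {c d : ℝ} : IntervalIntegrable (fun t : ℝ => σ (Circle.exp t) a) volume c d :=
  (cont_integrand hcont a).intervalIntegrable c d

lemma E_fixed {a : A} (hfa : ∀ z : Circle, σ z a = a) : E σ a = a := by
  have : (fun t : ℝ => σ (Circle.exp t) a) = fun _ => a := by
    funext t
    exact hfa _
  rw [E, this, intervalIntegral.integral_const, smul_smul, sub_zero,
    inv_mul_cancel₀ (by positivity : (2:ℝ) * π ≠ 0), one_smul]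

lemma E_wt {a : A} {k : ℤ} (hk : k ≠ 0) (hw : ∀ z : Circle, σ z a = ((z : ℂ) ^ k) • a) :
    E σ a = 0 := by
  have hc : ((k : ℂ) * Complex.I) ≠ 0 :=
    mul_ne_zero (Int.cast_ne_zero.mpr hk) Complex.I_ne_zero
  have e1 : (fun t : ℝ => σ (Circle.exp t) a)
      = fun t : ℝ => Complex.exp (((k : ℂ) * Complex.I) * t) • a := by
    funext t
    rw [hw (Circle.exp t)]
    congr 1
    rw [Circle.coe_exp, ← Complex.exp_int_mul]
    ring_nf
  rw [E, e1, intervalIntegral.integral_smul_const,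
    integral_exp_mul_complex hc]
  have e2 : Complex.exp ((k : ℂ) * Complex.I * (2 * π : ℝ)) = 1 := by
    have := Complex.exp_int_mul_two_pi_mul_I k
    rw [← this]
    congr 1
    push_cast
    ring
  have e3 : Complex.exp ((k : ℂ) * Complex.I * (0 : ℝ)) = 1 := by
    norm_num
  rw [e2, e3, sub_self, zero_div, zero_smul, smul_zero]

lemma E_sub (hcont : Continuous fun p : Circle × A => σ p.1 p.2) (a b : A) :
    E σ (a - b) = E σ a - E σ b := by
  have e1 : (fun t : ℝ => σ (Circle.exp t) (a - b))
      = fun t : ℝ => σ (Circle.exp t) a - σ (Circle.exp t) b := by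
    funext t
    rw [map_sub]
  rw [E, E, E, e1, intervalIntegral.integral_sub (integrable_integrand hcont a)
    (integrable_integrand hcont b), smul_sub]

lemma E_add (hcont : Continuous fun p : Circle × A => σ p.1 p.2) (a b : A) :
    E σ (a + b) = E σ a + E σ b := by
  have e1 : (fun t : ℝ => σ (Circle.exp t) (a + b))
      = fun t : ℝ => σ (Circle.exp t) a + σ (Circle.exp t) b := by
    funext t
    rw [map_add]
  rw [E, E, E, e1, intervalIntegral.integral_add (integrable_integrand hcont a)
    (integrable_integrand hcont b), smul_add]

lemma E_zero : E σ 0 = 0 := by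
  have e1 : (fun t : ℝ => σ (Circle.exp t) (0 : A)) = fun _ : ℝ => (0 : A) := by
    funext t
    rw [map_zero]
  rw [E, e1]
  simp

lemma E_norm_le (a : A) : ‖E σ a‖ ≤ ‖a‖ := by
  letI : CStarAlgebra A :=
    { ‹NormedRing A›, ‹StarRing A›, ‹CompleteSpace A›, ‹CStarRing A›,
      ‹NormedAlgebra ℂ A›, ‹StarModule ℂ A› with }
  have hb : ∀ t ∈ Set.uIoc (0 : ℝ) (2 * π), ‖σ (Circle.exp t) a‖ ≤ ‖a‖ := by
    intro t _
    rw [StarAlgEquiv.norm_map]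
  have h1 := intervalIntegral.norm_integral_le_of_norm_le_const hb
  rw [E, norm_smul]
  calc ‖(2 * π)⁻¹‖ * ‖∫ t in (0:ℝ)..(2*π), σ (Circle.exp t) a‖
      ≤ ‖(2 * π)⁻¹‖ * (‖a‖ * |2 * π - 0|) := by
        refine mul_le_mul_of_nonneg_left h1 (norm_nonneg _)
    _ = ‖a‖ := by
        rw [Real.norm_eq_abs, sub_zero, abs_of_pos (by positivity : (0:ℝ) < (2*π)⁻¹),
          abs_of_pos (by positivity : (0:ℝ) < 2*π)]
        field_simp

lemma E_continuous (hcont : Continuous fun p : Circle × A => σ p.1 p.2) :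
    Continuous (E σ) := by
  have : LipschitzWith 1 (E σ) := by
    refine LipschitzWith.of_dist_le_mul fun a b => ?_
    rw [dist_eq_norm, dist_eq_norm, ← E_sub hcont, NNReal.coe_one, one_mul]
    exact E_norm_le _
  exact this.continuous

end Analysis

end Modules

end SUqAux

theorem stmt18 (q : ℂ) (hq0 : 0 < ‖q‖) (hq1 : ‖q‖ < 1)
    {A : Type*} [NormedRing A] [StarRing A] [CStarRing A] [NormedAlgebra ℂ A]
    [StarModule ℂ A] [CompleteSpace A]
    (α γ : A) (h : SUq2Rel q α γ)
    -- `α` and `γ` generate `A` as a C*-algebra: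
    (hgen : closure ((StarAlgebra.adjoin ℂ {α, γ} : StarSubalgebra ℂ A) : Set A) = Set.univ)
    -- a continuous action of the circle group by *-automorphisms:
    (σ : Circle → A ≃⋆ₐ[ℂ] A)
    (hone : σ 1 = StarAlgEquiv.refl ℂ A)
    (hmul : ∀ z w : Circle, σ (z * w) = (σ w).trans (σ z))
    (hcont : Continuous fun p : Circle × A => σ p.1 p.2)
    (hα : ∀ z : Circle, σ z α = (z : ℂ) • α)
    (hγ : ∀ z : Circle, σ z γ = (z : ℂ) • γ) :
    {a : A | ∀ z : Circle, σ z a = a}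
      = closure
          ((StarAlgebra.adjoin ℂ {α * star γ, star γ * γ} : StarSubalgebra ℂ A) : Set A) := by
  have hq : q ≠ 0 := fun h0 => by simp [h0] at hq0
  have hGsEq : (StarAlgebra.adjoin ℂ {α * star γ, star γ * γ} : StarSubalgebra ℂ A)
      = SUqAux.Gs α γ := rfl
  rw [hGsEq]
  ext a
  simp only [Set.mem_setOf_eq]
  constructor
  · intro hfix
    have key : ∀ x ∈ StarAlgebra.adjoin ℂ ({α, γ} : Set A),
        SUqAux.E σ x ∈ closure ((SUqAux.Gs α γ : Set A)) := by
      intro x hx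
      have hxM := SUqAux.adjoin_le_M hq h hx
      refine Submodule.iSup_induction
        (motive := fun x => SUqAux.E σ x ∈ closure ((SUqAux.Gs α γ : Set A))) _ hxM ?_ ?_ ?_
      · intro k y hyk
        show SUqAux.E σ y ∈ closure ((SUqAux.Gs α γ : Set A))
        rcases eq_or_ne k 0 with rfl | hk
        · rw [SUqAux.V_zero, SUqAux.mem_W0] at hyk
          rw [SUqAux.E_fixed (fun z => SUqAux.Gs_fixed σ hα hγ z hyk)]
          exact subset_closure hyk
        · rw [SUqAux.E_wt hk (fun z => SUqAux.V_wt σ hα hγ z hyk)]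
          exact subset_closure (zero_mem (SUqAux.Gs α γ))
      · show SUqAux.E σ (0:A) ∈ closure ((SUqAux.Gs α γ : Set A))
        rw [SUqAux.E_zero]
        exact subset_closure (zero_mem (SUqAux.Gs α γ))
      · intro x y hx hy
        show SUqAux.E σ (x + y) ∈ closure ((SUqAux.Gs α γ : Set A))
        rw [SUqAux.E_add hcont]
        rw [← StarSubalgebra.topologicalClosure_coe, SetLike.mem_coe] at hx hy ⊢
        exact add_mem hx hy
    have haA : a ∈ closure ((StarAlgebra.adjoin ℂ ({α, γ} : Set A) :
        StarSubalgebra ℂ A) : Set A) := by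
      rw [hgen]
      trivial
    have hcl : IsClosed {x : A | SUqAux.E σ x ∈ closure ((SUqAux.Gs α γ : Set A))} :=
      IsClosed.preimage (SUqAux.E_continuous hcont) isClosed_closure
    have hsub : ((StarAlgebra.adjoin ℂ ({α, γ} : Set A) : StarSubalgebra ℂ A) : Set A)
        ⊆ {x : A | SUqAux.E σ x ∈ closure ((SUqAux.Gs α γ : Set A))} :=
      fun x hx => key x hx
    have hE := closure_minimal hsub hcl haA
    have hEa : SUqAux.E σ a = a := SUqAux.E_fixed hfix
    simpa [hEa] using hE
  · intro hcl z
    have hsub : (SUqAux.Gs α γ : Set A) ⊆ {x : A | σ z x = x} :=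
      fun g hg => SUqAux.Gs_fixed σ hα hγ z hg
    have hc2 : IsClosed {x : A | σ z x = x} :=
      isClosed_eq (hcont.comp (Continuous.prodMk continuous_const continuous_id))
        continuous_id
    exact closure_minimal hsub hc2 hcl
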